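/- arXiv:2007.11078 — 3 statements merged into one kernel-verified Lean document; each statement's English description precedes it below -/
import Mathlib

section
/- Let φ and Φ denote the standard normal PDF and CDF. The function h(t) = 2[(1+t²)Φ(-t) - tφ(t)] is strictly decreasing on (0, ∞). -/
noncomputable def stdNormalPDF (x : ℝ) : ℝ := Real.exp (-x ^ 2 / 2) / Real.sqrt (2 * Real.pi)

noncomputable def stdNormalCDF (x : ℝ) : ℝ := ∫ t in Set.Iic x, stdNormalPDF t

/-!
Since `φ' = -t φ` and `Φ' = φ`, the derivative of `h` is `4 (t Φ(-t) - φ(t))`. This is negative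
for every real `t` by the Mills-ratio inequality `t Φ(-t) < φ(t)`, which holds because
`φ(t) - t Φ(-t) = ∫_t^∞ (x - t) φ(x) dx` (using `∫_t^∞ x φ(x) dx = φ(t)`) has a positive integrand.
So `h` is strictly decreasing on all of `ℝ`.
-/

open Real MeasureTheory Set Filter Topology

lemma stdNormalPDF_pos (x : ℝ) : 0 < stdNormalPDF x := by
  unfold stdNormalPDF
  positivity

lemma stdNormalPDF_neg (x : ℝ) : stdNormalPDF (-x) = stdNormalPDF x := by
  rw [stdNormalPDF, neg_sq, stdNormalPDF]

lemma continuous_stdNormalPDF : Continuous stdNormalPDF := by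
  unfold stdNormalPDF
  fun_prop

lemma integrable_stdNormalPDF : Integrable stdNormalPDF := by
  refine ((integrable_exp_neg_mul_sq (by norm_num : (0 : ℝ) < 1 / 2)).div_const
    (√(2 * π))).congr (ae_of_all _ fun x => ?_)
  simp only [stdNormalPDF]
  ring_nf

lemma integrable_mul_stdNormalPDF : Integrable fun x : ℝ => x * stdNormalPDF x := by
  refine ((integrable_mul_exp_neg_mul_sq (by norm_num : (0 : ℝ) < 1 / 2)).div_const
    (√(2 * π))).congr (ae_of_all _ fun x => ?_)
  simp only [stdNormalPDF]
  ring_nf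

lemma hasDerivAt_stdNormalPDF (x : ℝ) :
    HasDerivAt stdNormalPDF (-x * stdNormalPDF x) x := by
  have hexponent : HasDerivAt (fun x : ℝ => -x ^ 2 / 2) (-x) x := by
    exact ((hasDerivAt_pow 2 x).neg.div_const 2).congr_deriv (by ring)
  unfold stdNormalPDF
  exact (hexponent.exp.div_const (√(2 * π))).congr_deriv (by ring)

lemma hasDerivAt_stdNormalCDF (x : ℝ) : HasDerivAt stdNormalCDF (stdNormalPDF x) x := by
  have hsplit : ∀ y, stdNormalCDF y = stdNormalCDF 0 + ∫ t in (0 : ℝ)..y, stdNormalPDF t := by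
    intro y
    rw [← intervalIntegral.integral_Iic_sub_Iic integrable_stdNormalPDF.integrableOn
      integrable_stdNormalPDF.integrableOn, stdNormalCDF, stdNormalCDF]
    ring
  have hFTC := intervalIntegral.integral_hasDerivAt_right
    integrable_stdNormalPDF.intervalIntegrable
    continuous_stdNormalPDF.stronglyMeasurable.stronglyMeasurableAtFilter
    continuous_stdNormalPDF.continuousAt (a := 0) (b := x)
  exact (hFTC.const_add _).congr_of_eventuallyEq (.of_forall hsplit)

lemma stdNormalCDF_neg (t : ℝ) : stdNormalCDF (-t) = ∫ x in Ioi t, stdNormalPDF x := by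
  rw [stdNormalCDF, ← integral_comp_neg_Ioi]
  simp only [stdNormalPDF_neg]

lemma tendsto_stdNormalPDF_atTop : Tendsto stdNormalPDF atTop (𝓝 0) := by
  have hexponent : Tendsto (fun x : ℝ => -x ^ 2 / 2) atTop atBot :=
    (tendsto_neg_atBot_iff.mpr (tendsto_pow_atTop two_ne_zero)).atBot_div_const two_pos
  unfold stdNormalPDF
  simpa only [zero_div, Function.comp_def] using (tendsto_exp_atBot.comp hexponent).div_const (√(2 * π))

lemma integral_Ioi_mul_stdNormalPDF (t : ℝ) :
    ∫ x in Ioi t, x * stdNormalPDF x = stdNormalPDF t := by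
  have hderiv (x : ℝ) : HasDerivAt (fun x => -stdNormalPDF x) (x * stdNormalPDF x) x := by
    simpa [Pi.neg_def] using (hasDerivAt_stdNormalPDF x).neg
  have := integral_Ioi_of_hasDerivAt_of_tendsto' (a := t) (fun x _ => hderiv x)
    integrable_mul_stdNormalPDF.integrableOn (by simpa only [neg_zero] using tendsto_stdNormalPDF_atTop.neg)
  simpa using this

lemma mul_stdNormalCDF_neg_lt_stdNormalPDF (t : ℝ) : t * stdNormalCDF (-t) < stdNormalPDF t := by
  set f := fun x => (x - t) * stdNormalPDF x
  have hf_int : Integrable f :=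
    (integrable_mul_stdNormalPDF.sub (integrable_stdNormalPDF.const_mul t)).congr
      (ae_of_all _ fun x => by simp only [f, Pi.sub_apply]; ring)
  have hf_pos : ∀ x ∈ Ioi t, 0 < f x := fun x hx =>
    mul_pos (sub_pos.2 hx) (stdNormalPDF_pos x)
  have hgap : ∫ x in Ioi t, f x = stdNormalPDF t - t * stdNormalCDF (-t) := by
    rw [stdNormalCDF_neg, ← integral_Ioi_mul_stdNormalPDF t, ← integral_const_mul,
      ← integral_sub integrable_mul_stdNormalPDF.integrableOn
        (integrable_stdNormalPDF.const_mul t).integrableOn]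
    exact setIntegral_congr_fun measurableSet_Ioi fun x _ => by simp only [f]; ring
  have hpos : 0 < ∫ x in Ioi t, f x := by
    rw [setIntegral_pos_iff_support_of_nonneg_ae
      ((ae_restrict_mem measurableSet_Ioi).mono fun x hx => (hf_pos x hx).le) hf_int.integrableOn]
    exact (isOpen_Ioi.measure_pos volume nonempty_Ioi).trans_le
      (measure_mono fun x hx => ⟨(hf_pos x hx).ne', hx⟩)
  linarith

/-- `E[η_t(W)²]`, where `η_t` is soft thresholding at level `t` and `W` is standard normal. -/
noncomputable def softThresholdRisk (t : ℝ) : ℝ :=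
  2 * ((1 + t ^ 2) * stdNormalCDF (-t) - t * stdNormalPDF t)

lemma hasDerivAt_softThresholdRisk (t : ℝ) :
    HasDerivAt softThresholdRisk (4 * (t * stdNormalCDF (-t) - stdNormalPDF t)) t := by
  have hΦ : HasDerivAt (fun t : ℝ => stdNormalCDF (-t)) (-stdNormalPDF t) t := by
    simpa [stdNormalPDF_neg, Function.comp_def] using
      (hasDerivAt_stdNormalCDF (-t)).comp t (hasDerivAt_neg t)
  have hquad : HasDerivAt (fun t : ℝ => 1 + t ^ 2) (2 * t) t := by
    simpa using (hasDerivAt_pow 2 t).const_add 1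
  exact (((hquad.mul hΦ).sub ((hasDerivAt_id t).mul (hasDerivAt_stdNormalPDF t))).const_mul 2
    ).congr_deriv (by simp only [id_eq]; ring)

theorem strictAnti_softThresholdRisk : StrictAnti softThresholdRisk :=
  strictAnti_of_deriv_neg fun t => by
    rw [(hasDerivAt_softThresholdRisk t).deriv]
    linarith [mul_stdNormalCDF_neg_lt_stdNormalPDF t]

theorem h_strictAnti :
    StrictAntiOn (fun t : ℝ => 2 * ((1 + t ^ 2) * stdNormalCDF (-t) - t * stdNormalPDF t))
      (Set.Ioi 0) :=
  strictAnti_softThresholdRisk.strictAntiOn _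
end

section
/- Let η_α be the soft-thresholding operator at level α > 0 and W a standard normal random variable. Then lim_{M→∞} E[(η_α(M + W) - M)²] = 1 + α². -/
/-!
Soft thresholding moves its argument by at most `α`: it is `y ↦ y - clamp_{[-α, α]}(y)`. Hence
`η_α(M + W) - M = W - clamp(M + W)` is dominated by `2(W² + α²)`, and it equals `W - α` as soon as
`M + W > α`. Dominated convergence gives the limit `E[(W - α)²] = Var W + α² = 1 + α²`.
-/

open ProbabilityTheory

noncomputable def softThresh (α x : ℝ) : ℝ := Real.sign x * max (|x| - α) 0

open MeasureTheory Filter Topology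

section SoftThresh

variable {α : ℝ}

lemma softThresh_eq_sub_clamp (hα : 0 ≤ α) (y : ℝ) :
    softThresh α y = y - max (-α) (min α y) := by
  unfold softThresh
  rcases lt_trichotomy y 0 with hy | rfl | hy
  · rw [Real.sign_of_neg hy, abs_of_neg hy]
    rcases le_or_gt (-α) y with h | h
    · rw [max_eq_right (by linarith), min_eq_right (by linarith), max_eq_right h]; ring
    · rw [max_eq_left (by linarith), min_eq_right (by linarith), max_eq_left h.le]; ring
  · simp [hα]
  · rw [Real.sign_of_pos hy, abs_of_pos hy]
    rcases le_or_gt y α with h | h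
    · rw [max_eq_right (by linarith), min_eq_right h, max_eq_right (by linarith)]; ring
    · rw [max_eq_left (by linarith), min_eq_left h.le, max_eq_right (by linarith)]; ring

lemma continuous_softThresh (hα : 0 ≤ α) : Continuous (softThresh α) := by
  simp_rw [funext (softThresh_eq_sub_clamp hα)]
  fun_prop

lemma abs_softThresh_sub_le (hα : 0 ≤ α) (y : ℝ) : |softThresh α y - y| ≤ α := by
  rw [softThresh_eq_sub_clamp hα, sub_sub_cancel_left, abs_neg]
  exact abs_le.mpr ⟨le_max_left _ _, max_le (by linarith) (min_le_left _ _)⟩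

lemma softThresh_of_lt (hα : 0 ≤ α) {y : ℝ} (h : α < y) : softThresh α y = y - α := by
  rw [softThresh_eq_sub_clamp hα, min_eq_left h.le, max_eq_right (by linarith)]

lemma sq_softThresh_add_sub_le (hα : 0 ≤ α) (M x : ℝ) :
    (softThresh α (M + x) - M) ^ 2 ≤ 2 * (x ^ 2 + α ^ 2) := by
  have h : |softThresh α (M + x) - M| ≤ |x| + α := by
    calc |softThresh α (M + x) - M| = |(softThresh α (M + x) - (M + x)) + x| := by ring_nf
      _ ≤ |softThresh α (M + x) - (M + x)| + |x| := abs_add_le _ _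
      _ ≤ |x| + α := by linarith [abs_softThresh_sub_le hα (M + x)]
  nlinarith [sq_abs (softThresh α (M + x) - M), sq_abs x, abs_nonneg (softThresh α (M + x) - M),
    sq_nonneg (|x| - α)]

lemma tendsto_softThresh_add_sub_atTop (hα : 0 ≤ α) (x : ℝ) :
    Tendsto (fun M => softThresh α (M + x) - M) atTop (𝓝 (x - α)) := by
  refine tendsto_const_nhds.congr' ?_
  filter_upwards [eventually_gt_atTop (α - x)] with M hM
  rw [softThresh_of_lt hα (by linarith)]
  ring

lemma tendsto_integral_sq_softThresh_add_sub_atTop (hα : 0 ≤ α) (μ : Measure ℝ)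
    [IsFiniteMeasure μ] (hμ : Integrable (fun x => x ^ 2) μ) :
    Tendsto (fun M => ∫ x, (softThresh α (M + x) - M) ^ 2 ∂μ) atTop
      (𝓝 (∫ x, (x - α) ^ 2 ∂μ)) := by
  refine tendsto_integral_filter_of_dominated_convergence (fun x => 2 * (x ^ 2 + α ^ 2))
    (Eventually.of_forall fun M => ?_) (Eventually.of_forall fun M => ?_)
    ((hμ.add (integrable_const _)).const_mul 2)
    (ae_of_all _ fun x => (tendsto_softThresh_add_sub_atTop hα x).pow 2)
  · exact (((continuous_softThresh hα).comp (continuous_const_add M)).sub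
      continuous_const).pow 2 |>.aestronglyMeasurable
  · refine ae_of_all _ fun x => ?_
    rw [Real.norm_of_nonneg (sq_nonneg _)]
    exact sq_softThresh_add_sub_le hα M x

end SoftThresh

lemma integral_sub_const_sq_gaussianReal (m c : ℝ) (v : NNReal) :
    ∫ x, (x - c) ^ 2 ∂gaussianReal m v = v + (m - c) ^ 2 := by
  have hX : MemLp (fun x : ℝ => x - c) 2 (gaussianReal m v) :=
    (memLp_id_gaussianReal 2).sub (memLp_const c)
  have hvar := variance_eq_sub hX
  rw [variance_sub_const (X := fun x => x) aestronglyMeasurable_id, variance_fun_id_gaussianReal,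
    integral_sub (f := fun x => x) ((memLp_id_gaussianReal 1).integrable le_rfl)
      (integrable_const c),
    integral_id_gaussianReal, integral_const, probReal_univ, one_smul] at hvar
  simp only [Pi.pow_apply] at hvar
  linarith

theorem soft_thresh_shift_limit (α : ℝ) (hα : 0 < α) :
    Filter.Tendsto (fun M : ℝ => ∫ x, (softThresh α (M + x) - M) ^ 2 ∂(gaussianReal 0 1))
      Filter.atTop (nhds (1 + α ^ 2)) := by
  have hsq : Integrable (fun x : ℝ => x ^ 2) (gaussianReal 0 1) :=
    (memLp_id_gaussianReal 2).integrable_sq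
  convert tendsto_integral_sq_softThresh_add_sub_atTop hα.le _ hsq using 2
  rw [integral_sub_const_sq_gaussianReal, NNReal.coe_one, zero_sub, neg_sq]
end

section
/- Let A = [0,1] × [0,1] and f : A → ℝ² be continuous. Suppose the restriction of f to the boundary ∂A is a Jordan curve (injective closed curve) C. Then every point of the bounded component of ℝ² \ C is in the image of f. -/
/-!
Suppose `p ∉ f '' A`. By Tietze, the inverse of the homeomorphism `f : ∂A → C` extends to a map
`e : ℝ² → A`. The map `Φ` that is `f ∘ e` on the closure of the bounded component `K` of `ℝ² \ C`
and the identity elsewhere is continuous, because `f ∘ e` is the identity on `C ⊇ ∂K`. So `Φ`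
misses `p` although it is the identity off a bounded set. This is impossible: viewing the plane
as `ℂ`, `Φ - p` has a continuous logarithm on the simply connected plane, which on a large circle
around `p` would be a continuous logarithm of `z - p`, whose argument must increase by `2π`.
-/

open Set Function Metric Bornology Complex Real

universe u

theorem IsOpen.frontier_connectedComponentIn_subset {X : Type*} [TopologicalSpace X]
    [LocallyConnectedSpace X] {U : Set X} (hU : IsOpen U) (x : X) :
    frontier (connectedComponentIn U x) ⊆ Uᶜ := by
  intro y hy hyU
  obtain ⟨z, hzy, hzx⟩ := mem_closure_iff.1 hy.1 _ hU.connectedComponentIn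
    (mem_connectedComponentIn hyU)
  have hyx : y ∈ connectedComponentIn U x := by
    rw [connectedComponentIn_eq hzx, ← connectedComponentIn_eq hzy]
    exact mem_connectedComponentIn hyU
  exact hy.2 (hU.connectedComponentIn.interior_eq.symm ▸ hyx)

instance Set.instTietzeExtensionProd {α β : Type*} [TopologicalSpace α] [TopologicalSpace β]
    (s : Set α) (t : Set β) [TietzeExtension.{u} s] [TietzeExtension.{u} t] :
    TietzeExtension.{u} (s ×ˢ t) :=
  .of_homeo (Homeomorph.Set.prod s t)

theorem IsCompact.exists_continuous_leftInvOn {X : Type*} {Y : Type u} [TopologicalSpace X]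
    [TopologicalSpace Y] [NormalSpace Y] [T2Space Y] {f : X → Y} {A B : Set X}
    [TietzeExtension.{u} A] (hB : IsCompact B) (hBA : B ⊆ A) (hf : ContinuousOn f B)
    (hinj : InjOn f B) :
    ∃ g : Y → X, Continuous g ∧ (∀ y, g y ∈ A) ∧ LeftInvOn g f B := by
  have : CompactSpace B := isCompact_iff_compactSpace.1 hB
  have hemb : Topology.IsClosedEmbedding (B.domRestrict f) :=
    hf.domRestrict.isClosedEmbedding hinj.injective
  obtain ⟨g, hgA, hg⟩ := ContinuousMap.exists_extension_forall_mem hemb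
    ⟨((↑) : B → X), continuous_subtype_val⟩ (t := A) (fun b => hBA b.2)
  exact ⟨g, g.continuous, hgA, fun x hx => congr($hg ⟨x, hx⟩)⟩

theorem Continuous.exists_continuous_exp_eq {X : Type*} [TopologicalSpace X]
    [SimplyConnectedSpace X] [LocallyPathConnectedSpace X] {g : X → ℂ} (hg : Continuous g)
    (hg0 : ∀ x, g x ≠ 0) : ∃ L : X → ℂ, Continuous L ∧ ∀ x, exp (L x) = g x := by
  obtain ⟨x₀⟩ : Nonempty X := inferInstance
  obtain ⟨L, ⟨-, hL⟩, -⟩ := isCoveringMapOn_exp.existsUnique_continuousMap_lifts ⟨g, hg⟩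
    (exp_log (hg0 x₀)) hg0
  exact ⟨L, L.continuous, congrFun hL⟩

theorem Complex.not_forall_exp_eq_sub_of_continuousOn_sphere {L : ℂ → ℂ} {c : ℂ} {r : ℝ}
    (hr : 0 < r) (hL : ContinuousOn L (sphere c r)) :
    ¬ ∀ z ∈ sphere c r, exp (L z) = z - c := by
  intro hexp
  set γ : ℝ → ℂ := fun θ => c + r * exp (θ * I)
  have hγ : ∀ θ, γ θ ∈ sphere c r := fun θ => by
    simp [γ, norm_exp_ofReal_mul_I, abs_of_pos hr]
  have hcont : Continuous fun θ : ℝ => L (γ θ) - θ * I :=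
    (hL.comp_continuous (by fun_prop) hγ).sub (by fun_prop)
  have hconst := isCoveringMap_exp.const_of_comp hcont (fun θ θ' => Subtype.ext <| by
    simp only [exp_sub, hexp _ (hγ _), γ, add_sub_cancel_left]
    rw [mul_div_cancel_right₀ _ (exp_ne_zero _), mul_div_cancel_right₀ _ (exp_ne_zero _)])
    (2 * π) 0
  have hγ2π : γ (2 * π) = γ 0 := by simp [γ, exp_two_pi_mul_I]
  simp only [hγ2π, ofReal_zero, zero_mul, sub_zero, sub_eq_self] at hconst
  exact two_pi_I_ne_zero (by exact_mod_cast hconst)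

theorem Complex.surjective_of_eqOn_compl_of_isBounded {g : ℂ → ℂ} (hg : Continuous g)
    {s : Set ℂ} (hs : IsBounded s) (hid : EqOn g id sᶜ) : Surjective g := by
  intro c
  by_contra! hc
  obtain ⟨L, hL, hexp⟩ :=
    (hg.sub continuous_const).exists_continuous_exp_eq fun z => sub_ne_zero.2 (hc z)
  obtain ⟨r, hr⟩ := hs.subset_ball c
  refine not_forall_exp_eq_sub_of_continuousOn_sphere (c := c) (r := max r 1)
    (lt_max_of_lt_right one_pos) hL.continuousOn fun z hz => ?_
  have hzs : z ∉ s := fun hzs => by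
    have := mem_ball.1 (hr hzs)
    rw [mem_sphere.1 hz] at this
    exact (le_max_left r 1).not_gt this
  rw [hexp, Pi.sub_apply, hid hzs, id]

theorem surjective_of_eqOn_compl_of_isBounded_prod {g : ℝ × ℝ → ℝ × ℝ} (hg : Continuous g)
    {s : Set (ℝ × ℝ)} (hs : IsBounded s) (hid : EqOn g id sᶜ) : Surjective g := by
  let e := equivRealProdCLM
  have hsurj : Surjective (e.symm ∘ g ∘ e) := by
    refine Complex.surjective_of_eqOn_compl_of_isBounded (s := e ⁻¹' s) (by fun_prop) ?_
      fun z hz => by simp [hid hz]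
    rw [← e.image_symm_eq_preimage]
    exact (e.symm : ℝ × ℝ →L[ℝ] ℂ).lipschitz.isBounded_image hs
  have hconj : g = e ∘ (e.symm ∘ g ∘ e) ∘ e.symm := by ext1; simp
  exact hconj ▸ e.surjective.comp (hsurj.comp e.symm.surjective)

theorem planar_intermediate_value
    (f : ℝ × ℝ → ℝ × ℝ)
    (A : Set (ℝ × ℝ)) (hA : A = Set.Icc (0:ℝ) 1 ×ˢ Set.Icc (0:ℝ) 1)
    (hf : ContinuousOn f A)
    (hinj : Set.InjOn f (frontier A)) :
    ∀ p : ℝ × ℝ, p ∉ f '' (frontier A) →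
      Bornology.IsBounded (connectedComponentIn (f '' (frontier A))ᶜ p) →
      p ∈ f '' A := by
  classical
  intro p hpC hbd
  by_contra hpA
  have : TietzeExtension.{0} A := hA ▸ inferInstance
  have hAc : IsCompact A := hA ▸ isCompact_Icc.prod isCompact_Icc
  have hBA : frontier A ⊆ A := hAc.isClosed.frontier_subset
  have hB : IsCompact (frontier A) := hAc.of_isClosed_subset isClosed_frontier hBA
  obtain ⟨e, he, heA, hinv⟩ := hB.exists_continuous_leftInvOn hBA (hf.mono hBA) hinj
  set K := connectedComponentIn (f '' frontier A)ᶜ p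
  have hfrK : frontier K ⊆ f '' frontier A := by
    simpa using (hB.image_of_continuousOn (hf.mono hBA)).isClosed.isOpen_compl
      |>.frontier_connectedComponentIn_subset p
  let Φ := (closure K).piecewise (f ∘ e) id
  have hΦ : Continuous Φ := by
    refine (hf.comp_continuous he heA).piecewise (fun x hx => ?_) continuous_id
    obtain ⟨b, hb, rfl⟩ := hfrK (frontier_closure_subset hx)
    simp [hinv hb]
  obtain ⟨x, hx⟩ := surjective_of_eqOn_compl_of_isBounded_prod hΦ hbd.closure
    (fun x hx => piecewise_eq_of_notMem _ _ _ hx) p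
  by_cases hxK : x ∈ closure K
  · exact hpA ⟨e x, heA x, by simpa [Φ, hxK] using hx⟩
  · simp only [Φ, piecewise_eq_of_notMem _ _ _ hxK, id] at hx
    exact hxK (hx ▸ subset_closure (mem_connectedComponentIn hpC))
end
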